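/- arXiv:1602.02049 — 3 statements merged into one kernel-verified Lean document; each statement's English description precedes it below -/
import Mathlib

section
/- Let K be a field and F ∈ K[x]^{n×n} be nonsingular and column reduced, with Hermite normal form H whose diagonal entries have degrees s = (s_1,…,s_n); let s_max = max_i s_i and u = (s_max,…,s_max) ∈ ℤ^n. Suppose N ∈ K[x]^{2n×n} is a [−u,−s]-minimal kernel basis of the n×2n matrix [F, −I_n], partitioned as N = [N_u; N_d] with square n×n blocks. Then N_u is unimodular, the row degrees of N_d equal s, and N_d is unimodularly equivalent to H, i.e. N_d = H·V for some unimodular V ∈ K[x]^{n×n}; moreover F·N_u = N_d. -/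
/-!
Since `F U = H` with `U` unimodular, the columns of `[U; H]` lie in the kernel of `[F, -I]`, so
`[N_u; N_d] W = [U; H]` for some `W`; then `N_u W = U` makes `N_u` and `W` unimodular, and
`N_d = H W⁻¹`. The predictable degree property of the column reduced `F` bounds the degrees of
`U` by `s_max`, so every column of `[U; H]` has `[-u,-s]`-degree at most `0`. The predictable
degree property of `N`, applied to the unimodular `W`, forces the `[-u,-s]`-column degrees of `N`
to be at most `0` as well, i.e. row `i` of `N_d` has degree at most `s_i`. These bounds are
attained because `deg det N_d = deg det H = ∑ s_i`.
-/

open Polynomial Matrix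

variable {K : Type*} [Field K]

/-- The degree of a polynomial, as an element of `WithBot ℤ` (`⊥` for the zero polynomial). -/
noncomputable def degZ (p : Polynomial K) : WithBot ℤ :=
  p.degree.map fun n : ℕ => (n : ℤ)

/-- The shifted column degree `cdeg_u p = max_i (deg p_i + u_i)` of a vector of polynomials. -/
noncomputable def cdegS {m : Type*} [Fintype m] (u : m → ℤ) (p : m → Polynomial K) : WithBot ℤ :=
  Finset.univ.sup fun i => degZ (p i) + (u i : WithBot ℤ)

/-- The row degree of row `i` of a polynomial matrix. -/
noncomputable def rdeg {m n : Type*} [Fintype n] (P : Matrix m n (Polynomial K)) (i : m) :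
    WithBot ℕ :=
  Finset.univ.sup fun j => (P i j).degree

/-- The shifted leading coefficient matrix `lcoeff (x^u · A · x^{-v})`. -/
noncomputable def lcoeffS {m n : Type*} (u : m → ℤ) (A : Matrix m n (Polynomial K)) (v : n → ℤ) :
    Matrix m n K :=
  Matrix.of fun i j => if 0 ≤ v j - u i then (A i j).coeff (v j - u i).toNat else 0

/-- A matrix over `K` has full column rank if its columns are linearly independent over `K`. -/
def FullColRankK {m n : Type*} (M : Matrix m n K) : Prop :=
  LinearIndependent K fun j => fun i => M i j

/-- `A` is `u`-column reduced with `u`-column degrees `v`. -/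
def IsColReducedWith {m n : Type*} [Fintype m] (u : m → ℤ) (A : Matrix m n (Polynomial K))
    (v : n → ℤ) : Prop :=
  (∀ j, cdegS u (fun i => A i j) = (v j : WithBot ℤ)) ∧ FullColRankK (lcoeffS u A v)

/-- `A` is `u`-column reduced. -/
def IsColReducedS {m n : Type*} [Fintype m] (u : m → ℤ) (A : Matrix m n (Polynomial K)) : Prop :=
  ∃ v : n → ℤ, IsColReducedWith u A v

/-- `F` is column reduced with (ordinary) column degrees `d`. -/
def IsColReducedNat {m n : Type*} [Fintype m] (F : Matrix m n (Polynomial K)) (d : n → ℕ) : Prop :=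
  IsColReducedWith (fun _ => (0 : ℤ)) F (fun j => (d j : ℤ))

/-- `N` is a (right) kernel basis of `F`. -/
def IsKernelBasis {m n k : Type*} [Fintype n] [Fintype k] (F : Matrix m n (Polynomial K))
    (N : Matrix n k (Polynomial K)) : Prop :=
  (LinearIndependent (Polynomial K) fun j => fun i => N i j) ∧
  F * N = 0 ∧
  ∀ q : n → Polynomial K, F.mulVec q = 0 → ∃ p : k → Polynomial K, N.mulVec p = q

/-- `N` is an `s`-minimal kernel basis of `F`. -/
def IsMinimalKernelBasis {m n k : Type*} [Fintype n] [Fintype k] (F : Matrix m n (Polynomial K))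
    (s : n → ℤ) (N : Matrix n k (Polynomial K)) : Prop :=
  IsKernelBasis F N ∧ IsColReducedS s N

/-- `T` is a column basis of `F`. -/
def IsColBasis {m n r : Type*} [Fintype n] [Fintype r] (F : Matrix m n (Polynomial K))
    (T : Matrix m r (Polynomial K)) : Prop :=
  (LinearIndependent (Polynomial K) fun j => fun i => T i j) ∧
  ∀ q : m → Polynomial K, (∃ p, F.mulVec p = q) ↔ (∃ p, T.mulVec p = q)

/-- `H` is in (column) Hermite normal form. -/
def IsHermiteForm {n : ℕ} (H : Matrix (Fin n) (Fin n) (Polynomial K)) : Prop :=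
  (∀ i j : Fin n, i < j → H i j = 0) ∧
  (∀ i : Fin n, (H i i).Monic) ∧
  (∀ i j : Fin n, j < i → (H i j).degree < (H i i).degree)

/-- `H` is the Hermite normal form of `F`. -/
def IsHermiteFormOf {n : ℕ} (F H : Matrix (Fin n) (Fin n) (Polynomial K)) : Prop :=
  IsHermiteForm H ∧ ∃ U : Matrix (Fin n) (Fin n) (Polynomial K), IsUnit U.det ∧ F * U = H

namespace WithBot

variable {α : Type*} [AddCommGroup α] [LinearOrder α] [IsOrderedAddMonoid α] {x : WithBot α}
  {a b : α}

lemma add_coe_le_coe_iff : x + a ≤ b ↔ x ≤ ((b - a : α) : WithBot α) := by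
  induction x using recBotCoe <;> simp [← coe_add, le_sub_iff_add_le]

lemma coe_le_add_coe_iff : (b : WithBot α) ≤ x + a ↔ ((b - a : α) : WithBot α) ≤ x := by
  induction x using recBotCoe <;> simp [← coe_add]

end WithBot

lemma Matrix.col_mul {R m n l : Type*} [NonUnitalNonAssocSemiring R] [Fintype n]
    (A : Matrix m n R) (B : Matrix n l R) (j : l) : (A * B).col j = A *ᵥ B.col j :=
  rfl

section Degrees

variable {p q : K[X]}

@[simp]
lemma degZ_zero : degZ (0 : K[X]) = ⊥ := rfl

lemma degZ_of_ne_zero (hp : p ≠ 0) : degZ p = ((p.natDegree : ℤ) : WithBot ℤ) := by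
  rw [degZ, degree_eq_natDegree hp, Nat.cast_withBot, WithBot.map_coe]

lemma degZ_eq_coe_iff {z : ℤ} : degZ p = z ↔ p ≠ 0 ∧ (p.natDegree : ℤ) = z := by
  by_cases hp : p = 0
  · simp [hp]
  · simp [degZ_of_ne_zero hp, hp]

lemma degZ_le_natCast_iff {n : ℕ} : degZ p ≤ ((n : ℤ) : WithBot ℤ) ↔ p.degree ≤ n := by
  rw [Nat.cast_withBot, ← WithBot.map_coe]
  exact WithBot.map_le_iff _ Int.ofNat_le

lemma natCast_le_degZ_iff {n : ℕ} :
    ((n : ℤ) : WithBot ℤ) ≤ degZ p ↔ (n : WithBot ℕ) ≤ p.degree := by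
  rw [Nat.cast_withBot, ← WithBot.map_coe]
  exact WithBot.map_le_iff _ Int.ofNat_le

lemma eq_zero_of_degZ_le_of_neg {z : ℤ} (h : degZ p ≤ z) (hz : z < 0) : p = 0 := by
  by_contra hp
  rw [degZ_of_ne_zero hp, WithBot.coe_le_coe] at h
  omega

noncomputable def coeffZ (p : K[X]) (z : ℤ) : K :=
  if 0 ≤ z then p.coeff z.toNat else 0

@[simp]
lemma coeffZ_natCast (p : K[X]) (n : ℕ) : coeffZ p n = p.coeff n := by
  simp [coeffZ]

@[simp]
lemma coeffZ_zero (z : ℤ) : coeffZ (0 : K[X]) z = 0 := by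
  simp [coeffZ]

lemma coeffZ_sum {ι : Type*} (s : Finset ι) (f : ι → K[X]) (z : ℤ) :
    coeffZ (∑ i ∈ s, f i) z = ∑ i ∈ s, coeffZ (f i) z := by
  unfold coeffZ
  split_ifs <;> simp

lemma coeffZ_mul_of_degZ_le {a b : ℤ} (hp : degZ p ≤ a) (hq : degZ q ≤ b) :
    coeffZ (p * q) (a + b) = coeffZ p a * coeffZ q b := by
  rcases lt_or_ge a 0 with ha | ha
  · simp [eq_zero_of_degZ_le_of_neg hp ha]
  rcases lt_or_ge b 0 with hb | hb
  · simp [eq_zero_of_degZ_le_of_neg hq hb]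
  lift a to ℕ using ha
  lift b to ℕ using hb
  rw [degZ_le_natCast_iff, ← natDegree_le_iff_degree_le] at hp hq
  exact_mod_cast coeff_mul_add_eq_of_natDegree_le hp hq

lemma le_degZ_of_coeffZ_ne_zero {z : ℤ} (h : coeffZ p z ≠ 0) :
    (z : WithBot ℤ) ≤ degZ p := by
  unfold coeffZ at h
  split_ifs at h with hz
  · lift z to ℕ using hz
    exact natCast_le_degZ_iff.mpr (le_degree_of_ne_zero (by simpa using h))
  · exact absurd rfl h

lemma coeffZ_ne_zero_of_degZ_eq {z : ℤ} (h : degZ p = z) : coeffZ p z ≠ 0 := by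
  obtain ⟨hp, rfl⟩ := degZ_eq_coe_iff.mp h
  simpa using hp

lemma lcoeffS_apply {m n : Type*} (u : m → ℤ) (A : Matrix m n K[X]) (v : n → ℤ) (i : m)
    (j : n) :
    lcoeffS u A v i j = coeffZ (A i j) (v j - u i) :=
  rfl

end Degrees

section ShiftedDegrees

variable {m : Type*} [Fintype m]

lemma le_cdegS (u : m → ℤ) (p : m → K[X]) (i : m) : degZ (p i) + u i ≤ cdegS u p :=
  Finset.le_sup (f := fun i => degZ (p i) + u i) (Finset.mem_univ i)

lemma cdegS_le_iff {u : m → ℤ} {p : m → K[X]} {a : WithBot ℤ} :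
    cdegS u p ≤ a ↔ ∀ i, degZ (p i) + u i ≤ a := by
  simp [cdegS]

lemma exists_degZ_add_eq_of_cdegS_eq {u : m → ℤ} {p : m → K[X]} {t : ℤ}
    (h : cdegS u p = t) : ∃ i, degZ (p i) + u i = t := by
  rcases (Finset.univ : Finset m).eq_empty_or_nonempty with hm | hm
  · simp [cdegS, hm] at h
  obtain ⟨i, -, hi⟩ := Finset.exists_mem_eq_sup _ hm fun i => degZ (p i) + u i
  exact ⟨i, hi ▸ h⟩

lemma IsColReducedWith.degZ_add_le {k : Type*} {u : m → ℤ} {A : Matrix m k K[X]} {v : k → ℤ}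
    (hA : IsColReducedWith u A v) (i : m) (j : k) : degZ (A i j) + u i ≤ v j :=
  (le_cdegS u (A.col j) i).trans (hA.1 j).le

lemma IsColReducedWith.nonneg_of_zero_shift {k : Type*} {A : Matrix m k K[X]} {v : k → ℤ}
    (hA : IsColReducedWith (fun _ => (0 : ℤ)) A v) (j : k) : 0 ≤ v j := by
  obtain ⟨i, hi⟩ := exists_degZ_add_eq_of_cdegS_eq (hA.1 j)
  rw [WithBot.coe_zero, add_zero, degZ_eq_coe_iff] at hi
  exact hi.2 ▸ Int.natCast_nonneg _

end ShiftedDegrees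

section PredictableDegree

variable {m k : Type*} [Fintype m] [Fintype k] {u : m → ℤ} {A : Matrix m k K[X]} {v : k → ℤ}

theorem IsColReducedWith.cdegS_le_cdegS_mulVec (hA : IsColReducedWith u A v) (p : k → K[X]) :
    cdegS v p ≤ cdegS u (A *ᵥ p) := by
  induction hT : cdegS v p using WithBot.recBotCoe with
  | bot => exact bot_le
  | coe t =>
  have hAdeg : ∀ i j, degZ (A i j) ≤ ((v j - u i : ℤ) : WithBot ℤ) := fun i j =>
    WithBot.add_coe_le_coe_iff.mp (hA.degZ_add_le i j)
  have hpdeg : ∀ j, degZ (p j) ≤ ((t - v j : ℤ) : WithBot ℤ) := fun j =>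
    WithBot.add_coe_le_coe_iff.mp (hT ▸ le_cdegS v p j)
  -- `c` holds the coefficients of `p` in shifted degree `t`; by `hcoeff`, those of `A *ᵥ p`
  -- are `lcoeffS u A v *ᵥ c`, which is nonzero by full column rank
  set c : k → K := fun j => coeffZ (p j) (t - v j)
  have hc : c ≠ 0 := by
    obtain ⟨j, hj⟩ := exists_degZ_add_eq_of_cdegS_eq hT
    exact Function.ne_iff.mpr ⟨j, coeffZ_ne_zero_of_degZ_eq <|
      le_antisymm (hpdeg j) (WithBot.coe_le_add_coe_iff.mp hj.ge)⟩
  have hcoeff : ∀ i, coeffZ ((A *ᵥ p) i) (t - u i) = (lcoeffS u A v *ᵥ c) i := fun i => by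
    simp only [mulVec, dotProduct, coeffZ_sum, lcoeffS_apply, c]
    refine Finset.sum_congr rfl fun j _ => ?_
    rw [← coeffZ_mul_of_degZ_le (hAdeg i j) (hpdeg j), sub_add_sub_cancel']
  obtain ⟨i, hi⟩ : ∃ i, (lcoeffS u A v *ᵥ c) i ≠ 0 := by
    by_contra! h
    have hinj : Function.Injective (lcoeffS u A v).mulVec := mulVec_injective_iff.mpr hA.2
    exact hc (hinj (by rw [mulVec_zero]; exact funext h))
  calc (t : WithBot ℤ) ≤ degZ ((A *ᵥ p) i) + u i :=
        WithBot.coe_le_add_coe_iff.mpr (le_degZ_of_coeffZ_ne_zero (hcoeff i ▸ hi))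
    _ ≤ cdegS u (A *ᵥ p) := le_cdegS u _ i

lemma IsColReducedWith.degZ_le_cdegS_mulVec (hA : IsColReducedWith (fun _ => (0 : ℤ)) A v)
    (p : k → K[X]) (j : k) : degZ (p j) ≤ cdegS (fun _ => (0 : ℤ)) (A *ᵥ p) :=
  calc degZ (p j) ≤ degZ (p j) + v j :=
        le_add_of_nonneg_right (WithBot.coe_nonneg.mpr (hA.nonneg_of_zero_shift j))
    _ ≤ cdegS v p := le_cdegS v p j
    _ ≤ _ := hA.cdegS_le_cdegS_mulVec p

lemma IsColReducedWith.le_of_cdegS_mul_le [DecidableEq k] (hA : IsColReducedWith u A v)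
    {W : Matrix k k K[X]} (hW : IsUnit W.det) {c : ℤ} (hAW : ∀ j, cdegS u ((A * W).col j) ≤ c)
    (l : k) : v l ≤ c := by
  obtain ⟨j, hj⟩ : ∃ j, W l j ≠ 0 := by
    by_contra! h
    exact hW.ne_zero (det_eq_zero_of_row_eq_zero l h)
  have h := (le_cdegS v (W.col j) l).trans ((hA.cdegS_le_cdegS_mulVec _).trans (hAW j))
  rw [col_apply, degZ_of_ne_zero hj, ← WithBot.coe_add, WithBot.coe_le_coe] at h
  omega

end PredictableDegree

lemma fromCols_neg_one_mul_fromRows_eq_zero_iff {R m n k : Type*} [Ring R] [Fintype m]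
    [Fintype n] [DecidableEq m] (F : Matrix m n R) (X : Matrix n k R) (Y : Matrix m k R) :
    (fromCols F (-1) : Matrix m (n ⊕ m) R) * fromRows X Y = 0 ↔ F * X = Y := by
  rw [fromCols_mul_fromRows, Matrix.neg_mul, Matrix.one_mul, ← sub_eq_add_neg, sub_eq_zero]

lemma IsKernelBasis.exists_mul_eq {m n k l : Type*} [Fintype n] [Fintype k]
    {M : Matrix m n K[X]} {N : Matrix n k K[X]} (hN : IsKernelBasis M N) {X : Matrix n l K[X]}
    (hX : M * X = 0) : ∃ B : Matrix k l K[X], N * B = X := by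
  have hcol : ∀ j, ∃ b, N *ᵥ b = X.col j := fun j =>
    hN.2.2 _ (by rw [← col_mul, hX]; rfl)
  choose b hb using hcol
  exact ⟨(of b)ᵀ, ext_col hb⟩

lemma IsKernelBasis.exists_isUnit_det_mul_eq {n : Type*} [Fintype n] [DecidableEq n]
    {F Nu Nd U H : Matrix n n K[X]} (hN : IsKernelBasis (fromCols F (-1)) (fromRows Nu Nd))
    (hU : IsUnit U.det) (hFU : F * U = H) :
    ∃ W : Matrix n n K[X], IsUnit W.det ∧ Nu * W = U ∧ Nd * W = H := by
  obtain ⟨W, hW⟩ := hN.exists_mul_eq ((fromCols_neg_one_mul_fromRows_eq_zero_iff F U H).mpr hFU)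
  obtain ⟨hNuW, hNdW⟩ := fromRows_inj ((fromRows_mul Nu Nd W).symm.trans hW)
  exact ⟨W, isUnit_of_mul_isUnit_right (by rwa [← det_mul, hNuW]), hNuW, hNdW⟩

namespace IsHermiteForm

variable {n : ℕ} {H : Matrix (Fin n) (Fin n) K[X]}

lemma degree_le (hH : IsHermiteForm H) (i j : Fin n) : (H i j).degree ≤ (H i i).natDegree := by
  obtain ⟨hupper, hmonic, hlower⟩ := hH
  rw [← degree_eq_natDegree (hmonic i).ne_zero]
  rcases lt_trichotomy i j with hij | rfl | hji
  · simp [hupper i j hij]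
  · exact le_rfl
  · exact (hlower i j hji).le

lemma degree_det (hH : IsHermiteForm H) : H.det.degree = ↑(∑ i, (H i i).natDegree) := by
  obtain ⟨hupper, hmonic, -⟩ := hH
  rw [det_of_isLowerTriangular H fun i j hij => hupper i j hij, degree_prod, Nat.cast_sum]
  exact Finset.sum_congr rfl fun i _ => degree_eq_natDegree (hmonic i).ne_zero

end IsHermiteForm

section RowDegrees

variable {ι : Type*} [Fintype ι] [DecidableEq ι]

lemma degree_det_le_sum_rdeg (M : Matrix ι ι K[X]) : M.det.degree ≤ ∑ i, rdeg M i := by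
  rw [det_apply']
  refine (degree_sum_le _ _).trans (Finset.sup_le fun σ _ => ?_)
  calc ((Equiv.Perm.sign σ : ℤ) * ∏ i, M (σ i) i : K[X]).degree
      ≤ ∑ i, (M (σ i) i).degree := (degree_mul_le _ _).trans <|
        (add_le_add (degree_intCast_le _) (degree_prod_le _ _)).trans_eq (zero_add _)
    _ ≤ ∑ i, rdeg M (σ i) := Finset.sum_le_sum fun i _ =>
        Finset.le_sup (f := fun j => (M (σ i) j).degree) (Finset.mem_univ i)
    _ = ∑ i, rdeg M i := Equiv.sum_comp σ _

lemma rdeg_eq_of_degree_det_eq_sum (M : Matrix ι ι K[X]) (d : ι → ℕ)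
    (hM : ∀ i j, (M i j).degree ≤ d i) (hdet : M.det.degree = ↑(∑ i, d i)) (i : ι) :
    rdeg M i = d i := by
  have hne : ∀ i, rdeg M i ≠ ⊥ := fun i hi => by
    have hrow : ∀ j, M i j = 0 := by simpa [rdeg, Finset.sup_eq_bot_iff] using hi
    rw [det_eq_zero_of_row_eq_zero i hrow, degree_zero, Nat.cast_withBot] at hdet
    exact WithBot.bot_ne_coe hdet
  choose r hr using fun i => WithBot.ne_bot_iff_exists.mp (hne i)
  have hrd : ∀ i, r i ≤ d i := fun i => by
    have : rdeg M i ≤ d i := Finset.sup_le fun j _ => hM i j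
    rwa [← hr, Nat.cast_withBot, WithBot.coe_le_coe] at this
  have hdr : ∑ i, d i ≤ ∑ i, r i := by
    have := hdet ▸ degree_det_le_sum_rdeg M
    simp_rw [← hr, Nat.cast_withBot, ← WithBot.coe_sum, WithBot.coe_le_coe] at this
    exact this
  have hsum := le_antisymm (Finset.sum_le_sum fun i _ => hrd i) hdr
  rw [← hr, (Finset.sum_eq_sum_iff_of_le fun i _ => hrd i).mp hsum i (Finset.mem_univ i)]
  rfl

end RowDegrees

theorem minimal_kernel_basis_gives_hermite_general {n : ℕ}
    (F : Matrix (Fin n) (Fin n) (Polynomial K))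
    (hFcr : IsColReducedS (fun _ => (0 : ℤ)) F)
    (H : Matrix (Fin n) (Fin n) (Polynomial K)) (hH : IsHermiteFormOf F H)
    (s : Fin n → ℕ) (hs : ∀ i, s i = (H i i).natDegree)
    (smax : ℕ) (hsmax : smax = Finset.univ.sup s)
    (Nu Nd : Matrix (Fin n) (Fin n) (Polynomial K))
    (hN : IsMinimalKernelBasis (fromCols F (-1))
      (Sum.elim (fun _ : Fin n => -(smax : ℤ)) (fun i => -(s i : ℤ)))
      (fromRows Nu Nd)) :
    IsUnit Nu.det ∧
    (∀ i, rdeg Nd i = (s i : WithBot ℕ)) ∧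
    (∃ V : Matrix (Fin n) (Fin n) (Polynomial K), IsUnit V.det ∧ H * V = Nd) ∧
    F * Nu = Nd := by
  obtain ⟨hker, v, hNred⟩ := hN
  obtain ⟨hHerm, U, hU, hFU⟩ := hH
  obtain ⟨d, hFred⟩ := hFcr
  obtain ⟨W, hWu, hNuW, hNdW⟩ := hker.exists_isUnit_det_mul_eq hU hFU
  have hHW : H * W⁻¹ = Nd := by rw [← hNdW, mul_nonsing_inv_cancel_right _ _ hWu]
  refine ⟨isUnit_of_mul_isUnit_left (by rwa [← det_mul, hNuW]), ?_,
    ⟨W⁻¹, isUnit_nonsing_inv_det _ hWu, hHW⟩,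
    (fromCols_neg_one_mul_fromRows_eq_zero_iff F Nu Nd).mp hker.2.1⟩
  have hHdeg : ∀ i j, degZ (H i j) ≤ (s i : ℤ) := fun i j =>
    degZ_le_natCast_iff.mpr (hs i ▸ hHerm.degree_le i j)
  have hUdeg : ∀ i j, degZ (U i j) ≤ (smax : ℤ) := fun i j =>
    (hFred.degZ_le_cdegS_mulVec (U.col j) i).trans <| cdegS_le_iff.mpr fun r => by
      rw [← col_mul, hFU, WithBot.add_coe_le_coe_iff, sub_zero]
      exact (hHdeg r j).trans (mod_cast hsmax ▸ Finset.le_sup (Finset.mem_univ r))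
  have hv : ∀ l, v l ≤ 0 := hNred.le_of_cdegS_mul_le hWu fun j => by
    simp only [fromRows_mul, hNuW, hNdW, cdegS_le_iff, Sum.forall, col_apply, fromRows_apply_inl,
      fromRows_apply_inr, Sum.elim_inl, Sum.elim_inr, WithBot.add_coe_le_coe_iff, zero_sub,
      neg_neg]
    exact ⟨fun i => hUdeg i j, fun i => hHdeg i j⟩
  refine rdeg_eq_of_degree_det_eq_sum Nd s (fun i j => ?_) ?_
  · have h := (hNred.degZ_add_le (Sum.inr i) j).trans (WithBot.coe_le_coe.mpr (hv j))
    rw [fromRows_apply_inr, Sum.elim_inr, WithBot.add_coe_le_coe_iff, zero_sub, neg_neg] at h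
    exact degZ_le_natCast_iff.mp h
  · rw [← hHW, det_mul, degree_mul, degree_eq_zero_of_isUnit (isUnit_nonsing_inv_det _ hWu),
      add_zero, hHerm.degree_det]
    simp only [hs]

/-- Lemma 5: if `N = [N_u; N_d]` is a `[-u,-s]`-minimal kernel basis of
`[F, -I]`, then `N_u` is unimodular, `N_d` has row degrees `s`, `N_d` is unimodularly
equivalent to the Hermite normal form `H` of `F`, and `F · N_u = N_d`. -/
theorem minimal_kernel_basis_gives_hermite {n : ℕ}
    (F : Matrix (Fin n) (Fin n) (Polynomial K))
    (hFns : F.det ≠ 0) (hFcr : IsColReducedS (fun _ => (0 : ℤ)) F)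
    (H : Matrix (Fin n) (Fin n) (Polynomial K)) (hH : IsHermiteFormOf F H)
    (s : Fin n → ℕ) (hs : ∀ i, s i = (H i i).natDegree)
    (smax : ℕ) (hsmax : smax = Finset.univ.sup s)
    (Nu Nd : Matrix (Fin n) (Fin n) (Polynomial K))
    (hN : IsMinimalKernelBasis (fromCols F (-1))
      (Sum.elim (fun _ : Fin n => -(smax : ℤ)) (fun i => -(s i : ℤ)))
      (fromRows Nu Nd)) :
    IsUnit Nu.det ∧
    (∀ i, rdeg Nd i = (s i : WithBot ℕ)) ∧
    (∃ V : Matrix (Fin n) (Fin n) (Polynomial K), IsUnit V.det ∧ H * V = Nd) ∧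
    F * Nu = Nd :=
  minimal_kernel_basis_gives_hermite_general F hFcr H hH s hs smax hsmax Nu Nd hN
end

section
/- Let K be a field and F ∈ K[x]^{n×n} be nonsingular and column reduced with column degrees d = (d_1,…,d_n), and let U ∈ K[x]^{n×n} be the unimodular matrix with F·U = H the Hermite normal form of F. Let s_max be the maximal degree of a diagonal entry of H. Then the entries of U satisfy deg u_ij ≤ s_max − d_i for all i, j; in particular every entry of U has degree at most s_max. -/
open Polynomial Matrix

variable {K : Type*} [Field K]

/-!
Column reducedness gives the predictable-degree property: if `u` is a column of `U` and
`t = max_k (deg u_k + d_k)`, then the coefficient of `x^t` in `F u` is the leading coefficient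
matrix of `F` applied to the nonzero vector `(coeff (u_k, t - d_k))_k`, hence is nonzero.
So `t` is at most the degree of some entry of the corresponding column of `H = F U`, and every
entry of a Hermite form has degree at most `s_max`.
-/

theorem degZ_le_coe_iff {p : K[X]} {z : ℤ} :
    degZ p ≤ (z : WithBot ℤ) ↔ (p ≠ 0 → (p.natDegree : ℤ) ≤ z) := by
  by_cases hp : p = 0
  · simp [degZ, hp]
  · rw [degZ, degree_eq_natDegree hp]
    simp [hp]

theorem IsColReducedNat.natDegree_le {m n : Type*} [Fintype m] {F : Matrix m n K[X]}
    {d : n → ℕ} (hF : IsColReducedNat F d) (i : m) (j : n) : (F i j).natDegree ≤ d j := by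
  have hle : degZ (F i j) + ((0 : ℤ) : WithBot ℤ) ≤ (d j : ℤ) :=
    hF.1 j ▸ Finset.le_sup (f := fun i => degZ (F i j) + ((0 : ℤ) : WithBot ℤ)) (Finset.mem_univ i)
  rw [WithBot.coe_zero, add_zero, degZ_le_coe_iff] at hle
  by_cases hij : F i j = 0
  · simp [hij]
  · exact_mod_cast hle hij

theorem IsColReducedNat.linearIndependent_col_leadingCoeff {m n : Type*} [Fintype m]
    {F : Matrix m n K[X]} {d : n → ℕ} (hF : IsColReducedNat F d) :
    LinearIndependent K (of fun i j => (F i j).coeff (d j)).col := by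
  have hlc : lcoeffS (fun _ => 0) F (fun j => (d j : ℤ)) = of fun i j => (F i j).coeff (d j) := by
    ext i j
    simp [lcoeffS]
  exact hlc ▸ hF.2

theorem coeff_mulVec_eq_mulVec_coeff {R : Type*} [CommSemiring R] {m n : Type*} [Fintype n]
    {F : Matrix m n R[X]} {d : n → ℕ} (hF : ∀ i j, (F i j).natDegree ≤ d j)
    {u : n → R[X]} {t : ℕ} (hu : ∀ j, u j ≠ 0 → (u j).natDegree + d j ≤ t) (i : m) :
    ((F *ᵥ u) i).coeff t =
      ((of fun i j => (F i j).coeff (d j)) *ᵥ fun j => (u j).coeff (t - d j)) i := by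
  simp only [mulVec, dotProduct, finsetSum_coeff, of_apply]
  refine Finset.sum_congr rfl fun j _ => ?_
  by_cases hj : u j = 0
  · simp [hj]
  · have hjt := hu j hj
    have := coeff_mul_add_eq_of_natDegree_le (hF i j) (show (u j).natDegree ≤ t - d j by omega)
    rwa [Nat.add_sub_cancel' (by omega)] at this

theorem exists_natDegree_add_le_degree_mulVec {m n : Type*} [Fintype n]
    {F : Matrix m n K[X]} {d : n → ℕ} (hF : ∀ i j, (F i j).natDegree ≤ d j)
    (hlc : LinearIndependent K (of fun i j => (F i j).coeff (d j)).col)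
    {u : n → K[X]} {k : n} (hk : u k ≠ 0) :
    ∃ i, (((u k).natDegree + d k : ℕ) : WithBot ℕ) ≤ ((F *ᵥ u) i).degree := by
  classical
  obtain ⟨k₀, hk₀, hmax⟩ := Finset.exists_max_image (Finset.univ.filter (u · ≠ 0))
    (fun j => (u j).natDegree + d j) ⟨k, by simpa using hk⟩
  set t := (u k₀).natDegree + d k₀
  have hu : ∀ j, u j ≠ 0 → (u j).natDegree + d j ≤ t := fun j hj => hmax j (by simpa using hj)
  have htop : (fun j => (u j).coeff (t - d j)) ≠ 0 := fun h => by
    have hlead : (u k₀).leadingCoeff = 0 := by simpa [t] using congrFun h k₀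
    exact (Finset.mem_filter.1 hk₀).2 (leadingCoeff_eq_zero.1 hlead)
  obtain ⟨i, hi⟩ : ∃ i, ((F *ᵥ u) i).coeff t ≠ 0 := by
    by_contra! h
    refine htop (mulVec_injective_iff.2 hlc ?_)
    funext i
    rw [mulVec_zero, ← coeff_mulVec_eq_mulVec_coeff hF hu]
    exact h i
  exact ⟨i, (WithBot.coe_le_coe.2 (hu k hk)).trans (le_degree_of_ne_zero hi)⟩

theorem natDegree_add_le_of_mul_degree_le {m n l : Type*} [Fintype n]
    {F : Matrix m n K[X]} {d : n → ℕ} (hF : ∀ i j, (F i j).natDegree ≤ d j)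
    (hlc : LinearIndependent K (of fun i j => (F i j).coeff (d j)).col)
    {U : Matrix n l K[X]} {s : ℕ} (hFU : ∀ i j, ((F * U) i j).degree ≤ s)
    {k : n} {j : l} (hkj : U k j ≠ 0) : (U k j).natDegree + d k ≤ s := by
  obtain ⟨i, hi⟩ := exists_natDegree_add_le_degree_mulVec hF hlc (u := fun k => U k j) hkj
  exact WithBot.coe_le_coe.1 (hi.trans (hFU i j))

theorem IsHermiteForm.degree_le_s6 {n : ℕ} {H : Matrix (Fin n) (Fin n) K[X]} (hH : IsHermiteForm H)
    (i j : Fin n) : (H i j).degree ≤ ↑(Finset.univ.sup fun i => (H i i).natDegree) := by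
  have hdiag : ∀ i, (H i i).degree ≤ ↑(Finset.univ.sup fun i => (H i i).natDegree) := fun i =>
    degree_le_natDegree.trans (WithBot.coe_le_coe.2
      (Finset.le_sup (f := fun i => (H i i).natDegree) (Finset.mem_univ i)))
  rcases lt_trichotomy i j with h | rfl | h
  · simp [hH.1 i j h]
  · exact hdiag i
  · exact (hH.2.2 i j h).le.trans (hdiag i)

theorem unimodular_multiplier_degree_bound_general {n : ℕ}
    (F U H : Matrix (Fin n) (Fin n) (Polynomial K)) (d : Fin n → ℕ)
    (hFcr : IsColReducedNat F d)
    (hFU : F * U = H) (hHf : IsHermiteForm H)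
    (smax : ℕ) (hsmax : smax = Finset.univ.sup fun i => (H i i).natDegree) :
    (∀ i j : Fin n, degZ (U i j) ≤ (((smax : ℤ) - (d i : ℤ) : ℤ) : WithBot ℤ)) ∧
    (∀ i j : Fin n, (U i j).degree ≤ (smax : WithBot ℕ)) := by
  have hbound : ∀ i j, U i j ≠ 0 → (U i j).natDegree + d i ≤ smax := fun i j =>
    natDegree_add_le_of_mul_degree_le hFcr.natDegree_le hFcr.linearIndependent_col_leadingCoeff
      (hFU ▸ hsmax ▸ hHf.degree_le_s6)
  refine ⟨fun i j => degZ_le_coe_iff.2 fun hij => ?_, fun i j => ?_⟩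
  · have := hbound i j hij
    omega
  · by_cases hij : U i j = 0
    · simp [hij]
    · exact natDegree_le_iff_degree_le.1 (by have := hbound i j hij; omega)

/-- for a column reduced `F` with column degrees `d` and `F·U = H` its
Hermite normal form, the entries of the unimodular multiplier satisfy
`deg u_ij ≤ s_max - d_i`; in particular `deg u_ij ≤ s_max`. -/
theorem unimodular_multiplier_degree_bound {n : ℕ}
    (F U H : Matrix (Fin n) (Fin n) (Polynomial K)) (d : Fin n → ℕ)
    (hFns : F.det ≠ 0) (hFcr : IsColReducedNat F d)
    (hU : IsUnit U.det) (hFU : F * U = H) (hHf : IsHermiteForm H)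
    (smax : ℕ) (hsmax : smax = Finset.univ.sup fun i => (H i i).natDegree) :
    (∀ i j : Fin n, degZ (U i j) ≤ (((smax : ℤ) - (d i : ℤ) : ℤ) : WithBot ℤ)) ∧
    (∀ i j : Fin n, (U i j).degree ≤ (smax : WithBot ℕ)) :=
  unimodular_multiplier_degree_bound_general F U H d hFcr hFU hHf smax hsmax
end

section
/- Let K be a field and F ∈ K[x]^{n×n} be nonsingular and column reduced with column degrees d = (d_1,…,d_n) and d_max = max_j d_j. Then for every integer k ≥ d_max there exist matrix polynomials G, C ∈ K[x]^{n×n} such that x^k·I_n = F·G + C, where deg C < d_max and every entry in row i of G has degree at most k − d_i. -/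
/-! Column reducedness makes the leading column coefficient matrix `L` invertible. So if every
entry of a vector `b` has degree at most `N ≥ d_max`, solving `L α = [coeff (b i) N]_i` and
subtracting `F g` with `g_j = α_j x^(N - d_j)` cancels the degree-`N` coefficients without
raising any degree. Iterating this from `N = k` down to `d_max` divides each column of `x^k I`
by `F`, with the quotient entries in row `j` built from monomials of degree at most `k - d_j`. -/

open Polynomial Matrix

variable {K : Type*} [Field K]

namespace Polynomial

variable {R : Type*} [Semiring R]

theorem degree_lt_of_degree_le_of_coeff_eq_zero {p : R[X]} {N : ℕ} (hle : p.degree ≤ N)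
    (hN : p.coeff N = 0) : p.degree < N := by
  rw [degree_lt_iff_coeff_zero]
  intro m hm
  rcases hm.eq_or_lt with rfl | hlt
  · exact hN
  · exact coeff_eq_zero_of_degree_lt (hle.trans_lt (by exact_mod_cast hlt))

theorem degree_le_of_degree_lt_succ {p : R[X]} {N : ℕ} (h : p.degree < (N + 1 : ℕ)) :
    p.degree ≤ N := by
  rw [degree_lt_iff_coeff_zero] at h
  rw [degree_le_iff_coeff_zero]
  intro m hm
  exact h m (Nat.succ_le_of_lt (by exact_mod_cast hm))

end Polynomial

theorem IsColReducedNat.degree_le {m n : Type*} [Fintype m] {F : Matrix m n K[X]} {d : n → ℕ}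
    (hF : IsColReducedNat F d) (i : m) (j : n) : (F i j).degree ≤ d j := by
  have h : degZ (F i j) + ((0 : ℤ) : WithBot ℤ) ≤ ((d j : ℤ) : WithBot ℤ) :=
    (hF.1 j).symm ▸ Finset.le_sup (f := fun i => degZ (F i j) + ((0 : ℤ) : WithBot ℤ))
      (Finset.mem_univ i)
  cases hp : (F i j).degree with
  | bot => exact bot_le
  | coe t =>
    simp only [degZ, hp, WithBot.map_coe, WithBot.coe_zero, add_zero, WithBot.coe_le_coe] at h
    rw [Nat.cast_withBot]
    exact WithBot.coe_le_coe.2 (by exact_mod_cast h)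

theorem IsColReducedNat.isUnit_colLeadingCoeff {n : Type*} [Fintype n] [DecidableEq n]
    {F : Matrix n n K[X]} {d : n → ℕ} (hF : IsColReducedNat F d) :
    IsUnit (Matrix.of fun i j => (F i j).coeff (d j)) := by
  rw [← Matrix.linearIndependent_cols_iff_isUnit]
  have h := hF.2
  simp only [FullColRankK, lcoeffS, sub_zero, Nat.cast_nonneg, if_true, Int.toNat_natCast] at h
  exact h

section Division

variable {ι : Type*} [Fintype ι] [DecidableEq ι] {F : Matrix ι ι K[X]} {d : ι → ℕ}

theorem exists_degree_sub_mulVec_lt (hdeg : ∀ i j, (F i j).degree ≤ d j)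
    (hL : IsUnit (Matrix.of fun i j => (F i j).coeff (d j))) {N : ℕ} (hdN : ∀ j, d j ≤ N)
    (b : ι → K[X]) (hb : ∀ i, (b i).degree ≤ N) :
    ∃ g : ι → K[X], (∀ j, (g j).degree ≤ ↑(N - d j)) ∧
      ∀ i, ((b - F *ᵥ g) i).degree < N := by
  obtain ⟨α, hα⟩ := Matrix.mulVec_surjective_iff_isUnit.2 hL fun i => (b i).coeff N
  set g : ι → K[X] := fun j => C (α j) * X ^ (N - d j)
  have hg : ∀ j, (g j).degree ≤ ↑(N - d j) := fun j => degree_C_mul_X_pow_le _ _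
  have hterm_degree : ∀ i j, (F i j * g j).degree ≤ N := fun i j =>
    calc (F i j * g j).degree ≤ (F i j).degree + (g j).degree := degree_mul_le _ _
      _ ≤ ↑(d j) + ↑(N - d j) := add_le_add (hdeg i j) (hg j)
      _ = N := by norm_cast; have := hdN j; omega
  have hterm_coeff : ∀ i j, (F i j * g j).coeff N = (F i j).coeff (d j) * α j := fun i j => by
    rw [← mul_assoc, coeff_mul_X_pow', if_pos (Nat.sub_le _ _), coeff_mul_C,
      Nat.sub_sub_self (hdN j)]
  refine ⟨g, hg, fun i => degree_lt_of_degree_le_of_coeff_eq_zero ?_ ?_⟩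
  · rw [Pi.sub_apply]
    refine (degree_sub_le _ _).trans (max_le (hb i) ?_)
    simp only [Matrix.mulVec, dotProduct]
    exact (degree_sum_le _ _).trans (Finset.sup_le fun j _ => hterm_degree i j)
  · have := congrFun hα i
    simp only [Pi.sub_apply, Matrix.mulVec, dotProduct, Matrix.of_apply] at this ⊢
    rw [coeff_sub, finsetSum_coeff, Finset.sum_congr rfl fun j _ => hterm_coeff i j, this,
      sub_self]

theorem exists_mulVec_add_eq_of_degree_lt (hdeg : ∀ i j, (F i j).degree ≤ d j)
    (hL : IsUnit (Matrix.of fun i j => (F i j).coeff (d j))) {δ : ℕ} (hδ : ∀ j, d j ≤ δ)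
    (D : ℕ) (b : ι → K[X]) (hb : ∀ i, (b i).degree < D) :
    ∃ g c : ι → K[X], F *ᵥ g + c = b ∧ (∀ i, (c i).degree < δ) ∧
      ∀ i, (g i).degree < ↑(D - d i) := by
  induction D generalizing b with
  | zero => exact ⟨0, b, by simp, fun i => (hb i).trans_le (by simp), by simp⟩
  | succ N ih =>
    by_cases hN : N + 1 ≤ δ
    · exact ⟨0, b, by simp, fun i => (hb i).trans_le (by exact_mod_cast hN), by simp⟩
    have hdN : ∀ j, d j ≤ N := fun j => by have := hδ j; omega
    obtain ⟨g₀, hg₀, hlt⟩ := exists_degree_sub_mulVec_lt hdeg hL hdN b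
      fun i => degree_le_of_degree_lt_succ (hb i)
    obtain ⟨g, c, hgc, hc, hg⟩ := ih _ hlt
    refine ⟨g₀ + g, c, ?_, hc, fun i => ?_⟩
    · rw [Matrix.mulVec_add, add_assoc, hgc, add_sub_cancel]
    · have := hdN i
      refine (degree_add_le _ _).trans_lt (max_lt ((hg₀ i).trans_lt ?_) ((hg i).trans_le ?_))
      all_goals norm_cast; omega

end Division

theorem power_division_with_remainder_general {n : ℕ}
    (F : Matrix (Fin n) (Fin n) (Polynomial K)) (d : Fin n → ℕ)
    (hFcr : IsColReducedNat F d)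
    (dmax : ℕ) (hdmax : dmax = Finset.univ.sup d)
    (k : ℕ) :
    ∃ G C : Matrix (Fin n) (Fin n) (Polynomial K),
      ((Polynomial.X : Polynomial K) ^ k) • (1 : Matrix (Fin n) (Fin n) (Polynomial K)) = F * G + C ∧
      (∀ i j, (C i j).degree < (dmax : WithBot ℕ)) ∧
      (∀ i j, (G i j).degree ≤ ((k - d i : ℕ) : WithBot ℕ)) := by
  have hd : ∀ j, d j ≤ dmax := fun j => hdmax ▸ Finset.le_sup (Finset.mem_univ j)
  have hXk : ∀ j i : Fin n, ((Pi.single j (X ^ k) : Fin n → K[X]) i).degree < ↑(k + 1) :=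
    fun j i => by
      rcases eq_or_ne i j with rfl | hij
      · simpa using (degree_X_pow_le (R := K) k).trans_lt (by norm_cast; omega)
      · simp [hij]
  choose g c hgc hc hg using fun j =>
    exists_mulVec_add_eq_of_degree_lt hFcr.degree_le hFcr.isUnit_colLeadingCoeff hd (k + 1) _
      (hXk j)
  refine ⟨(Matrix.of g)ᵀ, (Matrix.of c)ᵀ, ?_, fun i j => hc j i, fun i j => ?_⟩
  · refine Matrix.ext fun i j => ?_
    have := congrFun (hgc j) i
    simp only [Pi.add_apply, Matrix.mulVec, dotProduct, Pi.single_apply] at this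
    simp only [Matrix.add_apply, Matrix.mul_apply, Matrix.transpose_apply, Matrix.of_apply,
      Matrix.smul_apply, Matrix.one_apply, this, smul_eq_mul, mul_ite, mul_one, mul_zero]
  · exact degree_le_of_degree_lt_succ ((hg j i).trans_le (by norm_cast; omega))

/-- Lemma 7: for a nonsingular column reduced `F` with column degrees `d`
and any `k ≥ d_max`, there are polynomial matrices `G`, `C` with `x^k · I = F·G + C`,
`deg C < d_max`, and every entry in row `i` of `G` of degree at most `k - d_i`. -/
theorem power_division_with_remainder {n : ℕ}
    (F : Matrix (Fin n) (Fin n) (Polynomial K)) (d : Fin n → ℕ)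
    (hFns : F.det ≠ 0) (hFcr : IsColReducedNat F d)
    (dmax : ℕ) (hdmax : dmax = Finset.univ.sup d)
    (k : ℕ) (hk : dmax ≤ k) :
    ∃ G C : Matrix (Fin n) (Fin n) (Polynomial K),
      ((Polynomial.X : Polynomial K) ^ k) • (1 : Matrix (Fin n) (Fin n) (Polynomial K)) = F * G + C ∧
      (∀ i j, (C i j).degree < (dmax : WithBot ℕ)) ∧
      (∀ i j, (G i j).degree ≤ ((k - d i : ℕ) : WithBot ℕ)) :=
  power_division_with_remainder_general F d hFcr dmax hdmax k
end
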